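/- arXiv:2301.13303 — 3 statements merged into one kernel-verified Lean document; each statement's English description precedes it below -/
import Mathlib

section
/- Let K be symmetric positive definite and partition the objective tr(V^T K V) − log det(V V^T) over lower-triangular V with prescribed column sparsity sets S_i containing i. The objective decomposes into a sum over columns: ∑_i (V_{S_i,i}^T K_{S_i,S_i} V_{S_i,i} − 2 log V_{ii}), so the columns can be optimized independently. -/
open Matrix

/-- For symmetric positive-definite `K` and lower-triangular `V` whose column `i`
is supported on a sparsity set `S i ⊆ {i,…,n}` with `i ∈ S i` and `V_{ii} > 0`,
the objective `tr(Vᵀ K V) − log det(V Vᵀ)` decomposes into a sum over columns: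
`∑ i (V_{S_i,i}ᵀ K_{S_i,S_i} V_{S_i,i} − 2 log V_{ii})`. -/
theorem objective_column_decomposition
    {n : ℕ} (K V : Matrix (Fin n) (Fin n) ℝ) (hK : K.PosDef) (hKsymm : K.IsSymm)
    (S : Fin n → Finset (Fin n))
    (hmem : ∀ i : Fin n, i ∈ S i)
    (hgeq : ∀ i : Fin n, ∀ j ∈ S i, i ≤ j)
    (hsupp : ∀ i j : Fin n, V j i ≠ 0 → j ∈ S i)
    (hdiag : ∀ i : Fin n, 0 < V i i) :
    Matrix.trace (Vᵀ * K * V) - Real.log (V * Vᵀ).det =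
      ∑ i : Fin n,
        ((∑ j ∈ S i, ∑ l ∈ S i, V j i * K j l * V l i) - 2 * Real.log (V i i)) := by
  have hV0 : ∀ i j : Fin n, j ∉ S i → V j i = 0 := by
    intro i j hj
    by_contra h
    exact hj (hsupp i j h)
  -- determinant
  have hdet : V.det = ∏ i : Fin n, V i i := by
    apply Matrix.det_of_lowerTriangular
    intro a b hab
    apply hV0
    intro hmem'
    exact absurd (hgeq b a hmem') (not_le.mpr hab)
  have hdetVV : (V * Vᵀ).det = (∏ i : Fin n, V i i) ^ 2 := by
    rw [Matrix.det_mul, Matrix.det_transpose, hdet, sq]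
  have hlog : Real.log (V * Vᵀ).det = ∑ i : Fin n, 2 * Real.log (V i i) := by
    rw [hdetVV, Real.log_pow]
    rw [Real.log_prod (fun i _ => (hdiag i).ne')]
    rw [Finset.mul_sum]
    norm_num
  -- trace
  have htr : Matrix.trace (Vᵀ * K * V) =
      ∑ i : Fin n, ∑ j ∈ S i, ∑ l ∈ S i, V j i * K j l * V l i := by
    rw [Matrix.trace]
    apply Finset.sum_congr rfl
    intro i _
    have : (Vᵀ * K * V).diag i = ∑ l : Fin n, ∑ j : Fin n, V j i * K j l * V l i := by
      simp only [Matrix.diag, Matrix.mul_apply, Matrix.transpose_apply, Finset.sum_mul]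
    rw [this, Finset.sum_comm]
    rw [← Finset.sum_subset (Finset.subset_univ (S i)) (by
      intro j _ hj
      simp [hV0 i j hj])]
    apply Finset.sum_congr rfl
    intro j _
    rw [← Finset.sum_subset (Finset.subset_univ (S i)) (by
      intro l _ hl
      simp [hV0 i l hl])]
  rw [htr, hlog, ← Finset.sum_sub_distrib]
end

section
/- For the column-wise objective v ↦ v^T A v − 2 log v_1 with A = K_{S_i,S_i} symmetric positive definite, the unique minimizer with v_1 > 0 is v̂ = (A⁻¹e_1)/√((A⁻¹e_1)_1); combining with the column decomposition, the KL-optimal sparse inverse Cholesky factor has nonzero column entries L̂_{S_i,i} = b_i (b_{i,1})^{-1/2} with b_i = (K_{S_i,S_i})⁻¹ e_1. -/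
open Matrix

lemma posdef_submatrix_inj {m n : ℕ} (M : Matrix (Fin n) (Fin n) ℝ) (hM : M.PosDef)
    (e : Fin m → Fin n) (he : Function.Injective e) : (M.submatrix e e).PosDef := by
  refine PosDef.of_dotProduct_mulVec_pos ?_ ?_
  · have := hM.isHermitian
    rw [IsHermitian, conjTranspose_submatrix, this]
  · intro x hx
    set P : Matrix (Fin n) (Fin m) ℝ := Matrix.submatrix 1 id e with hP
    have hkey : M.submatrix e e = Pᵀ * M * P := by
      rw [(by simp : M = 1 * M * 1), Matrix.submatrix_mul (he₂ := Function.bijective_id),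
        Matrix.submatrix_mul (he₂ := Function.bijective_id), Matrix.submatrix_id_id]
      congr 1
      · ext p q; simp [hP, Matrix.transpose_apply, Matrix.one_apply]
    have hy : P.mulVec x ≠ 0 := by
      obtain ⟨j, hj⟩ := Function.ne_iff.mp hx
      intro h
      apply hj
      have := congrFun h (e j)
      simpa [hP, Matrix.mulVec, dotProduct, Matrix.one_apply, he.eq_iff] using this
    have := hM.dotProduct_mulVec_pos hy
    simp only [RCLike.re_to_real, star_trivial] at this ⊢
    rw [hkey]
    rw [← Matrix.mulVec_mulVec, ← Matrix.mulVec_mulVec, Matrix.dotProduct_mulVec (v := x)]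
    convert this using 2
    ext p
    simp [Matrix.vecMul_transpose]
    exact Matrix.vecMul_transpose P x

/-- For the column-wise objective `v ↦ vᵀ A v − 2 log v₁` with `A = K_{S_i,S_i}`
symmetric positive definite (the principal submatrix of a SPD matrix `K` along an
ordered index set `S_i` with first element `i`, encoded by a strictly monotone
embedding `e` with `e 0 = i`), the unique minimizer with `v₁ > 0` is
`v̂ = (A⁻¹e₁)/√((A⁻¹e₁)₁)`; i.e., the KL-optimal sparse inverse Cholesky factor
has nonzero column entries `L̂_{S_i,i} = b_i (b_{i,1})^{-1/2}`,
`b_i = (K_{S_i,S_i})⁻¹ e₁`. -/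
theorem sparse_cholesky_column_minimizer
    {n k : ℕ} (K : Matrix (Fin n) (Fin n) ℝ) (hK : K.PosDef) (hKsymm : K.IsSymm)
    (i : Fin n) (e : Fin (k + 1) → Fin n)
    (hmono : StrictMono e) (he0 : e 0 = i)
    (A : Matrix (Fin (k + 1)) (Fin (k + 1)) ℝ) (hA : A = K.submatrix e e)
    (b : Fin (k + 1) → ℝ) (hb : b = A⁻¹.mulVec (Pi.single 0 1))
    (vhat : Fin (k + 1) → ℝ) (hvhat : vhat = fun j => b j * (b 0) ^ (-(1 / 2 : ℝ))) :
    0 < b 0 ∧ 0 < vhat 0 ∧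
      ∀ v : Fin (k + 1) → ℝ, 0 < v 0 →
        (vhat ⬝ᵥ A.mulVec vhat - 2 * Real.log (vhat 0) ≤
            v ⬝ᵥ A.mulVec v - 2 * Real.log (v 0)) ∧
        (v ⬝ᵥ A.mulVec v - 2 * Real.log (v 0) =
            vhat ⬝ᵥ A.mulVec vhat - 2 * Real.log (vhat 0) → v = vhat) := by
  have hApos : A.PosDef := hA ▸ posdef_submatrix_inj K hK e hmono.injective
  have hAsymm : Aᵀ = A := by
    rw [hA, Matrix.transpose_submatrix, hKsymm.eq]
  have hAinv : Invertible A := hApos.isUnit.invertible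
  have hsingle : (Pi.single 0 1 : Fin (k + 1) → ℝ) ≠ 0 := by
    intro h
    have := congrFun h 0
    simp at this
  -- A.mulVec b = e₁
  have hAb : A.mulVec b = Pi.single 0 1 := by
    rw [hb, Matrix.mulVec_mulVec, Matrix.mul_nonsing_inv A (isUnit_iff_ne_zero.mpr hApos.det_pos.ne'), Matrix.one_mulVec]
  -- b 0 > 0
  have hb0 : 0 < b 0 := by
    have hinv : A⁻¹.PosDef := hApos.inv
    have := hinv.dotProduct_mulVec_pos hsingle
    simp only [RCLike.re_to_real, star_trivial] at this
    have heq : (Pi.single 0 1 : Fin (k + 1) → ℝ) ⬝ᵥ A⁻¹.mulVec (Pi.single 0 1) = b 0 := by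
      rw [hb]
      simp [single_dotProduct]
    rwa [heq] at this
  set c : ℝ := b 0 with hc
  set s : ℝ := c ^ (-(1 / 2 : ℝ)) with hs
  have hspos : 0 < s := Real.rpow_pos_of_pos hb0 _
  have hss : s * s = c⁻¹ := by
    rw [hs, ← Real.rpow_add hb0]
    norm_num
    exact Real.rpow_neg_one c
  have hvhat0 : vhat 0 = c * s := by rw [hvhat]
  have hvhat0pos : 0 < vhat 0 := by rw [hvhat0]; positivity
  -- A.mulVec vhat = s • e₁
  have hvhat_eq : vhat = s • b := by
    funext j; simp [hvhat, hs, mul_comm]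
  have hAvhat : A.mulVec vhat = s • (Pi.single 0 1 : Fin (k + 1) → ℝ) := by
    rw [hvhat_eq, Matrix.mulVec_smul, hAb]
  -- vhat ⬝ᵥ A vhat = 1
  have hquad : vhat ⬝ᵥ A.mulVec vhat = 1 := by
    rw [hAvhat, dotProduct_smul, dotProduct_single]
    rw [hvhat0]
    field_simp
    rw [smul_eq_mul]
    rw [show s * (c * s) = s * s * c by ring, hss, inv_mul_cancel₀ hb0.ne']
  refine ⟨hb0, hvhat0pos, fun v hv0 => ?_⟩
  set t : ℝ := v 0 / vhat 0 with ht
  have htpos : 0 < t := div_pos hv0 hvhat0pos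
  set w : Fin (k + 1) → ℝ := v - t • vhat with hw
  have hw0 : w 0 = 0 := by
    simp only [hw, Pi.sub_apply, Pi.smul_apply, smul_eq_mul, ht]
    field_simp
    ring
  have hv_eq : v = w + t • vhat := by simp [hw]
  -- cross terms vanish
  have hcross1 : w ⬝ᵥ A.mulVec vhat = 0 := by
    rw [hAvhat, dotProduct_smul, dotProduct_single, hw0]
    simp
  have hcross2 : vhat ⬝ᵥ A.mulVec w = 0 := by
    rw [Matrix.dotProduct_mulVec, ← Matrix.mulVec_transpose, hAsymm, hAvhat]
    rw [smul_dotProduct, single_dotProduct, hw0]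
    simp
  have hexpand : v ⬝ᵥ A.mulVec v = w ⬝ᵥ A.mulVec w + t ^ 2 := by
    rw [hv_eq]
    simp only [Matrix.mulVec_add, Matrix.mulVec_smul, dotProduct_add, add_dotProduct,
      dotProduct_smul, smul_dotProduct, smul_eq_mul, hcross1, hcross2, hquad]
    ring
  have hwA : 0 ≤ w ⬝ᵥ A.mulVec w := by
    have := hApos.posSemidef.dotProduct_mulVec_nonneg w
    simpa using this
  have hlogv : Real.log (v 0) = Real.log t + Real.log (vhat 0) := by
    have : v 0 = t * vhat 0 := by rw [ht, div_mul_cancel₀ _ hvhat0pos.ne']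
    rw [this, Real.log_mul htpos.ne' hvhat0pos.ne']
  have hlogle : Real.log t ≤ t - 1 := Real.log_le_sub_one_of_pos htpos
  have hdiff : v ⬝ᵥ A.mulVec v - 2 * Real.log (v 0) -
      (vhat ⬝ᵥ A.mulVec vhat - 2 * Real.log (vhat 0)) =
      w ⬝ᵥ A.mulVec w + (t ^ 2 - 1 - 2 * Real.log t) := by
    rw [hexpand, hquad, hlogv]; ring
  have htterm : 0 ≤ t ^ 2 - 1 - 2 * Real.log t := by nlinarith [sq_nonneg (t - 1)]
  constructor
  · nlinarith
  · intro heq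
    have hzero : w ⬝ᵥ A.mulVec w + (t ^ 2 - 1 - 2 * Real.log t) = 0 := by
      rw [← hdiff, heq]; ring
    have ht1 : t = 1 := by
      by_contra hne
      have : Real.log t < t - 1 := Real.log_lt_sub_one_of_pos htpos hne
      nlinarith [sq_nonneg (t - 1)]
    have hwzero : w = 0 := by
      by_contra hne
      have := hApos.dotProduct_mulVec_pos hne
      simp only [RCLike.re_to_real, star_trivial] at this
      nlinarith
    rw [hv_eq, hwzero, ht1]
    simp
end

section
/- Let V be invertible lower triangular supported on a sparsity pattern S^q, and let ℓ ∈ ℝ^n be supported on S^p_i ⊆ {i,…,n}. If A ⊆ {i,…,n} is any superset of S^p_i closed under the DAG of S^q (i.e., j ∈ A and (k,j) ∈ S^q, k > j implies k ∈ A), then (V⁻¹ℓ)_j = 0 for all j ∉ A. -/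
open Matrix

namespace Matrix.IsLowerTriangular

variable {ι R : Type*} [Fintype ι] [LinearOrder ι]

theorem diag_ne_zero_of_isUnit_det [CommRing R] [Nontrivial R] {V : Matrix ι ι R}
    (hV : V.IsLowerTriangular) (hdet : IsUnit V.det) (j : ι) : V j j ≠ 0 := by
  rw [det_of_isLowerTriangular V hV] at hdet
  exact fun hj => hdet.ne_zero (Finset.prod_eq_zero (Finset.mem_univ j) hj)

/-- Forward substitution determines `x j` from `(V *ᵥ x) j` and those `x k` with `k < j` and
`V j k ≠ 0`. -/
theorem apply_eq_zero_of_mulVec_apply_eq_zero [Ring R] [NoZeroDivisors R] {V : Matrix ι ι R}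
    (hV : V.IsLowerTriangular) (hdiag : ∀ j, V j j ≠ 0) {A : Set ι}
    (hA : ∀ j ∈ A, ∀ k, V k j ≠ 0 → j < k → k ∈ A) {x : ι → R}
    (hx : ∀ j ∉ A, (V *ᵥ x) j = 0) : ∀ j ∉ A, x j = 0 := by
  intro j
  induction j using WellFoundedLT.induction with
  | _ j ih =>
  intro hj
  have hoff : ∀ k ≠ j, V j k * x k = 0 := by
    intro k hkj
    rcases hkj.lt_or_gt with hk | hk
    · by_cases hVjk : V j k = 0
      · rw [hVjk, zero_mul]
      · rw [ih k hk fun hkA => hj (hA k hkA j hVjk hk), mul_zero]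
    · rw [hV (OrderDual.toDual_lt_toDual.mpr hk), zero_mul]
  have hjj : V j j * x j = 0 := by
    rw [← hx j hj, mulVec, dotProduct,
      Finset.sum_eq_single j (fun k _ => hoff k) (by simp)]
  exact (mul_eq_zero.mp hjj).resolve_left (hdiag j)

end Matrix.IsLowerTriangular

theorem sparse_triangular_solve_support_general
    {n : ℕ} (V : Matrix (Fin n) (Fin n) ℝ) (hV : IsUnit V.det)
    (hVlt : ∀ j k : Fin n, j < k → V j k = 0)
    (Sq : Set (Fin n × Fin n))
    (hVsupp : ∀ k j : Fin n, V k j ≠ 0 → (k, j) ∈ Sq)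
    (Spi : Set (Fin n))
    (l : Fin n → ℝ) (hl : ∀ j : Fin n, l j ≠ 0 → j ∈ Spi)
    (A : Set (Fin n)) (hSpA : Spi ⊆ A)
    (hclosed : ∀ j ∈ A, ∀ k : Fin n, (k, j) ∈ Sq → j < k → k ∈ A) :
    ∀ j : Fin n, j ∉ A → (V⁻¹.mulVec l) j = 0 := by
  have hlow : V.IsLowerTriangular := fun j k hjk => hVlt j k hjk
  refine hlow.apply_eq_zero_of_mulVec_apply_eq_zero (hlow.diag_ne_zero_of_isUnit_det hV)
    (fun j hj k hVkj hjk => hclosed j hj k (hVsupp k j hVkj) hjk) ?_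
  intro j hj
  rw [mulVec_mulVec, mul_nonsing_inv V hV, one_mulVec]
  by_contra hlj
  exact hj (hSpA (hl j hlj))

/-- Let `V` be invertible lower triangular supported on a sparsity pattern `Sq`,
and `ℓ` supported on `Spi ⊆ {i,…,n}`. If `A ⊆ {i,…,n}` is any superset of `Spi`
closed under the DAG of `Sq` (i.e., `j ∈ A`, `(k,j) ∈ Sq`, `k > j` implies
`k ∈ A`), then `(V⁻¹ℓ)_j = 0` for all `j ∉ A`. -/
theorem sparse_triangular_solve_support
    {n : ℕ} (V : Matrix (Fin n) (Fin n) ℝ) (hV : IsUnit V.det)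
    (hVlt : ∀ j k : Fin n, j < k → V j k = 0)
    (Sq : Set (Fin n × Fin n))
    (hlower : ∀ p ∈ Sq, p.2 ≤ p.1)
    (hdiag : ∀ j : Fin n, (j, j) ∈ Sq)
    (hVsupp : ∀ k j : Fin n, V k j ≠ 0 → (k, j) ∈ Sq)
    (i : Fin n) (Spi : Set (Fin n)) (hSpi : ∀ j ∈ Spi, i ≤ j)
    (l : Fin n → ℝ) (hl : ∀ j : Fin n, l j ≠ 0 → j ∈ Spi)
    (A : Set (Fin n)) (hAi : ∀ j ∈ A, i ≤ j) (hSpA : Spi ⊆ A)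
    (hclosed : ∀ j ∈ A, ∀ k : Fin n, (k, j) ∈ Sq → j < k → k ∈ A) :
    ∀ j : Fin n, j ∉ A → (V⁻¹.mulVec l) j = 0 :=
  sparse_triangular_solve_support_general V hV hVlt Sq hVsupp Spi l hl A hSpA hclosed
end
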